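/- For the r-dimensional hypercube Q_r, gpn(Q_r) = 2^{r−1} · r! · Σ_{j=0}^{r−1} 1/j! + 2^r. -/

import Mathlib

open SimpleGraph

/-- The number of geodesics (shortest paths) in `G` between `u` and `v`. -/
noncomputable def numGeodesics {V : Type*} (G : SimpleGraph V) (u v : V) : ℕ :=
  {p : G.Walk u v | p.IsPath ∧ p.length = G.dist u v}.ncard

lemma numGeodesics_comm {V : Type*} (G : SimpleGraph V) (u v : V) :
    numGeodesics G u v = numGeodesics G v u := by
  have himg : {p : G.Walk v u | p.IsPath ∧ p.length = G.dist v u} =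
      (fun p : G.Walk u v => p.reverse) '' {p : G.Walk u v | p.IsPath ∧ p.length = G.dist u v} := by
    ext p
    constructor
    · rintro ⟨hp, hl⟩
      exact ⟨p.reverse, ⟨hp.reverse, by
        rw [SimpleGraph.Walk.length_reverse, hl, SimpleGraph.dist_comm]⟩, p.reverse_reverse⟩
    · rintro ⟨q, ⟨hq, hl⟩, rfl⟩
      exact ⟨hq.reverse, by rw [SimpleGraph.Walk.length_reverse, hl, SimpleGraph.dist_comm]⟩
  have hinj : Function.Injective (fun p : G.Walk u v => p.reverse) := by
    intro p q h
    simpa using congrArg SimpleGraph.Walk.reverse h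
  unfold numGeodesics
  rw [himg, Set.ncard_image_of_injective _ hinj]

/-- The geodesic subpath number of a finite graph: the sum, over unordered pairs of
distinct vertices, of the number of geodesics between them, plus `n` for the `n`
geodesics of length zero. -/
noncomputable def gpn {V : Type*} [Fintype V] [DecidableEq V] (G : SimpleGraph V) : ℕ :=
  (∑ e ∈ Finset.univ.filter (fun e : Sym2 V => ¬ e.IsDiag),
      Sym2.lift ⟨fun u v => numGeodesics G u v, fun u v => numGeodesics_comm G u v⟩ e)
    + Fintype.card V

/-- The `r`-dimensional hypercube graph: vertices are binary strings of length `r`,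
adjacent iff they differ in exactly one coordinate. -/
def cubeGraph (r : ℕ) : SimpleGraph (Fin r → Bool) where
  Adj u v := hammingDist u v = 1
  symm := ⟨by intro u v h; rwa [hammingDist_comm]⟩
  loopless := ⟨by intro u h; simp [hammingDist_self] at h⟩


/-!
In `Q_r` the graph distance is the Hamming distance, and a geodesic from `u` to `v` is the same
as an order in which to flip the `d = hammingDist u v` coordinates where they differ: its first
step must flip one of these `d` coordinates (flipping any other one moves away from `v`), so
there are `d!` geodesics. Identifying `v` with the set of coordinates where it differs from `u`,
there are `C(r, d)` vertices at distance `d` from `u`, so the sum over ordered pairs is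
`2^r ∑_d C(r, d) d! = 2^r (r! ∑_{j<r} 1/j! + 1)`. Each unordered pair of distinct vertices is
counted twice there and each diagonal pair once, which gives the formula.
-/

open Finset
open scoped Nat

theorem Finset.sum_sum_sym2_mk {α M : Type*} [Fintype α] [DecidableEq α] [AddCommMonoid M]
    (F : Sym2 α → M) :
    ∑ u, ∑ v, F s(u, v) =
      2 • ∑ e ∈ univ.filter (fun e : Sym2 α => ¬ e.IsDiag), F e + ∑ u, F s(u, u) := by
  have himage : (univ : Finset α).offDiag.image (fun p => s(p.1, p.2)) =
      univ.filter (fun e : Sym2 α => ¬ e.IsDiag) := by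
    ext ⟨a, b⟩
    simp only [mem_image, mem_offDiag, mem_univ, true_and, mem_filter, Sym2.mk_isDiag_iff,
      Prod.exists]
    constructor
    · rintro ⟨x, y, hxy, h⟩
      rw [Sym2.eq_iff] at h
      grind
    · exact fun h => ⟨a, b, h, rfl⟩
  have hfiber (a b : α) (hab : a ≠ b) :
      (univ : Finset α).offDiag.filter (fun p => s(p.1, p.2) = s(a, b)) = {(a, b), (b, a)} := by
    ext ⟨x, y⟩
    simp only [mem_filter, mem_offDiag, mem_univ, Sym2.eq_iff, mem_insert, mem_singleton,
      Prod.mk.injEq]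
    grind
  have hoff : ∑ p ∈ (univ : Finset α).offDiag, F s(p.1, p.2) =
      2 • ∑ e ∈ univ.filter (fun e : Sym2 α => ¬ e.IsDiag), F e := by
    rw [sum_comp, himage, smul_sum]
    refine sum_congr rfl fun e he => ?_
    induction e with
    | _ a b =>
      have hab : a ≠ b := by simpa using he
      rw [hfiber a b hab, card_pair (by simp [hab])]
  rw [← hoff, ← sum_product' (f := fun u v => F s(u, v)), ← diag_union_offDiag,
    sum_union (disjoint_diag_offDiag _), add_comm, sum_diag]

namespace SimpleGraph

variable {V : Type*} (G : SimpleGraph V)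

def walkLengthSuccEquiv (u v : V) (n : ℕ) :
    {p : G.Walk u v // p.length = n + 1} ≃
      Σ w : G.neighborSet u, {q : G.Walk w v // q.length = n} where
  toFun
    | ⟨.cons h q, hq⟩ => ⟨⟨_, h⟩, q, by simpa using hq⟩
  invFun
    | ⟨⟨_, h⟩, q, hq⟩ => ⟨.cons ((G.mem_neighborSet _ _).1 h) q, by simp [hq]⟩
  left_inv
    | ⟨.cons _ _, _⟩ => rfl
  right_inv
    | ⟨⟨_, _⟩, _, _⟩ => rfl

theorem natCard_walks_length_zero_self (u : V) : Nat.card {p : G.Walk u u // p.length = 0} = 1 :=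
  Nat.card_eq_one_iff_exists.mpr
    ⟨⟨.nil, rfl⟩, fun p => Subtype.ext (Walk.length_eq_zero_iff.mp p.2).eq_nil⟩

theorem numGeodesics_eq_natCard (u v : V) :
    numGeodesics G u v = Nat.card {p : G.Walk u v // p.length = G.dist u v} := by
  rw [numGeodesics, ← Nat.card_coe_set_eq]
  exact Nat.card_congr (Equiv.subtypeEquivRight fun p =>
    ⟨And.right, fun h => ⟨p.isPath_of_length_eq_dist h, h⟩⟩)

theorem numGeodesics_self (u : V) : numGeodesics G u u = 1 := by
  rw [numGeodesics_eq_natCard, dist_self, natCard_walks_length_zero_self]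

theorem two_mul_gpn [Fintype V] [DecidableEq V] :
    2 * gpn G = ∑ u, ∑ v, numGeodesics G u v + Fintype.card V := by
  have h := Finset.sum_sum_sym2_mk (Sym2.lift ⟨numGeodesics G, numGeodesics_comm G⟩)
  simp only [Sym2.lift_mk, numGeodesics_self, sum_const, card_univ, smul_eq_mul, mul_one] at h
  rw [h, gpn]
  ring

end SimpleGraph

section Hamming

variable {ι : Type*} [DecidableEq ι]

def flipBit (u : ι → Bool) (i : ι) : ι → Bool := Function.update u i (!u i)

theorem flipBit_apply (u : ι → Bool) (i j : ι) :
    flipBit u i j = if j = i then !u i else u j :=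
  Function.update_apply ..

theorem flipBit_injective (u : ι → Bool) : Function.Injective (flipBit u) := by
  intro i j h
  by_contra hij
  simpa [flipBit_apply, hij] using congrFun h i

variable [Fintype ι]

theorem hammingDist_flipBit_of_ne {u v : ι → Bool} {i : ι} (h : u i ≠ v i) :
    hammingDist (flipBit u i) v + 1 = hammingDist u v := by
  have : ({j | flipBit u i j ≠ v j} : Finset ι) = ({j | u j ≠ v j} : Finset ι).erase i := by
    ext j
    simp only [mem_filter, mem_univ, true_and, mem_erase, flipBit_apply]
    by_cases hj : j = i
    · subst hj; simpa using h
    · simp [hj]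
  rw [hammingDist, this, card_erase_add_one (by simpa using h), hammingDist]

theorem hammingDist_flipBit_of_eq {u v : ι → Bool} {i : ι} (h : u i = v i) :
    hammingDist (flipBit u i) v = hammingDist u v + 1 := by
  have : ({j | flipBit u i j ≠ v j} : Finset ι) = insert i ({j | u j ≠ v j} : Finset ι) := by
    ext j
    simp only [mem_filter, mem_univ, true_and, mem_insert, flipBit_apply]
    by_cases hj : j = i
    · subst hj; simp [h]
    · simp [hj]
  rw [hammingDist, this, card_insert_of_notMem (by simpa using h), hammingDist]

theorem hammingDist_flipBit_self (u : ι → Bool) (i : ι) : hammingDist u (flipBit u i) = 1 := by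
  rw [hammingDist_comm, hammingDist_flipBit_of_eq rfl, hammingDist_self]

theorem exists_eq_flipBit_of_hammingDist_eq_one {u w : ι → Bool} (h : hammingDist u w = 1) :
    ∃ i, w = flipBit u i := by
  obtain ⟨i, hi⟩ := card_eq_one.mp h
  refine ⟨i, funext fun j => ?_⟩
  have hj : u j ≠ w j ↔ j = i := by simpa using congrArg (j ∈ ·) hi
  rw [flipBit_apply]
  split_ifs with hji
  · subst hji; exact Bool.eq_not_iff.mpr (Ne.symm (hj.mpr rfl))
  · exact (not_not.mp (hj.not.mpr hji)).symm

def diffFinsetEquiv (u : ι → Bool) : (ι → Bool) ≃ Finset ι where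
  toFun v := {i | u i ≠ v i}
  invFun s j := if j ∈ s then !u j else u j
  left_inv v := by
    funext j
    by_cases h : u j = v j <;> simp_all [Bool.eq_not_iff]
  right_inv s := by
    ext j
    by_cases h : j ∈ s <;> simp [h]

theorem sum_apply_hammingDist {M : Type*} [AddCommMonoid M] (u : ι → Bool) (f : ℕ → M) :
    ∑ v, f (hammingDist u v) =
      ∑ d ∈ range (Fintype.card ι + 1), (Fintype.card ι).choose d • f d := by
  rw [Fintype.sum_equiv (diffFinsetEquiv u) (f <| hammingDist u ·) (f #·) fun _ => rfl,
    ← powerset_univ, sum_powerset_apply_card, card_univ]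

end Hamming

instance (r : ℕ) : DecidableRel (cubeGraph r).Adj := fun u v =>
  inferInstanceAs (Decidable (hammingDist u v = 1))

section Cube

variable {r : ℕ}

theorem cubeGraph_adj_flipBit (u : Fin r → Bool) (i : Fin r) :
    (cubeGraph r).Adj u (flipBit u i) :=
  hammingDist_flipBit_self u i

theorem cubeGraph_hammingDist_le_length {u v : Fin r → Bool} (p : (cubeGraph r).Walk u v) :
    hammingDist u v ≤ p.length := by
  induction p with
  | nil => simp
  | @cons a b c hab q ih =>
    calc hammingDist a c ≤ hammingDist a b + hammingDist b c := hammingDist_triangle a b c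
      _ ≤ q.length + 1 := by rw [show hammingDist a b = 1 from hab]; omega
      _ = (q.cons hab).length := (Walk.length_cons hab q).symm

noncomputable def cubeGraphNeighborEquiv (u : Fin r → Bool) :
    Fin r ≃ (cubeGraph r).neighborSet u :=
  Equiv.ofBijective (fun i => ⟨flipBit u i, cubeGraph_adj_flipBit u i⟩)
    ⟨fun _ _ h => flipBit_injective u (congrArg Subtype.val h), fun ⟨_, hw⟩ =>
      (exists_eq_flipBit_of_hammingDist_eq_one hw).imp fun _ hi => Subtype.ext hi.symm⟩

theorem natCard_walks_cubeGraph_of_hammingDist {d : ℕ} {u v : Fin r → Bool}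
    (h : hammingDist u v = d) :
    Nat.card {p : (cubeGraph r).Walk u v // p.length = d} = d ! := by
  induction d generalizing u with
  | zero =>
    obtain rfl := eq_of_hammingDist_eq_zero h
    exact natCard_walks_length_zero_self _ u
  | succ d ih =>
    have hterm (i : Fin r) : Nat.card {q : (cubeGraph r).Walk (flipBit u i) v // q.length = d}
        = if u i ≠ v i then d ! else 0 := by
      split_ifs with hi
      · exact ih (by have := hammingDist_flipBit_of_ne hi; omega)
      · have : IsEmpty {q : (cubeGraph r).Walk (flipBit u i) v // q.length = d} :=
          ⟨fun q => by
            have := cubeGraph_hammingDist_le_length q.1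
            have := hammingDist_flipBit_of_eq (not_not.mp hi)
            omega⟩
        exact Nat.card_of_isEmpty
    calc Nat.card {p : (cubeGraph r).Walk u v // p.length = d + 1}
        = ∑ i : Fin r, Nat.card {q : (cubeGraph r).Walk (flipBit u i) v // q.length = d} := by
          rw [Nat.card_congr (walkLengthSuccEquiv _ u v d), Nat.card_sigma]
          exact (Fintype.sum_equiv (cubeGraphNeighborEquiv u) _ _ fun i => rfl).symm
      _ = (d + 1) ! := by
          rw [sum_congr rfl fun i _ => hterm i, ← sum_filter, sum_const, smul_eq_mul,
            ← hammingDist, h, Nat.factorial_succ]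

theorem cubeGraph_dist (u v : Fin r → Bool) : (cubeGraph r).dist u v = hammingDist u v := by
  obtain ⟨⟨p, hp⟩⟩ :
      Nonempty {p : (cubeGraph r).Walk u v // p.length = hammingDist u v} := by
    refine (Nat.card_pos_iff.mp ?_).1
    rw [natCard_walks_cubeGraph_of_hammingDist rfl]
    exact Nat.factorial_pos _
  obtain ⟨q, hq⟩ := p.reachable.exists_walk_length_eq_dist
  exact le_antisymm (hp ▸ dist_le p) (hq ▸ cubeGraph_hammingDist_le_length q)

theorem numGeodesics_cubeGraph (u v : Fin r → Bool) :
    numGeodesics (cubeGraph r) u v = (hammingDist u v)! := by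
  rw [numGeodesics_eq_natCard, cubeGraph_dist, natCard_walks_cubeGraph_of_hammingDist rfl]

theorem two_mul_gpn_cubeGraph (r : ℕ) :
    2 * gpn (cubeGraph r) = 2 ^ r * ∑ d ∈ range (r + 1), r.choose d * d ! + 2 ^ r := by
  simp only [two_mul_gpn, numGeodesics_cubeGraph, sum_apply_hammingDist (f := Nat.factorial),
    Fintype.card_fin, smul_eq_mul, sum_const, Finset.card_univ, Fintype.card_fun,
    Fintype.card_bool]

end Cube

theorem sum_choose_mul_factorial_eq (r : ℕ) :
    ∑ d ∈ range (r + 1), (r.choose d * d ! : ℝ) =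
      r ! * ∑ j ∈ range r, (1 : ℝ) / j ! + 1 := by
  rw [← sum_range_reflect, sum_range_succ, mul_sum]
  refine congrArg₂ (· + ·) (sum_congr rfl fun j hj => ?_) (by simp)
  have hjr : j ≤ r := (mem_range.mp hj).le
  have := Nat.choose_mul_factorial_mul_factorial (Nat.sub_le r j)
  rw [Nat.sub_sub_self hjr] at this
  rw [add_tsub_cancel_right]
  field_simp
  exact_mod_cast this

/-- `gpn(Q_r) = 2^(r-1) · r! · Σ_{j=0}^{r-1} 1/j! + 2^r`. -/
theorem gpn_cubeGraph (r : ℕ) :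
    (gpn (cubeGraph r) : ℝ) =
      2 ^ (r - 1) * (Nat.factorial r : ℝ) *
          (∑ j ∈ Finset.range r, (1 : ℝ) / (Nat.factorial j : ℝ))
        + 2 ^ r := by
  have h := congrArg (Nat.cast : ℕ → ℝ) (two_mul_gpn_cubeGraph r)
  push_cast at h
  rw [sum_choose_mul_factorial_eq] at h
  cases r with
  | zero => simp only [pow_zero, range_zero, sum_empty, mul_zero, zero_add] at h ⊢; linarith
  | succ k => rw [pow_succ] at h; rw [Nat.add_sub_cancel]; linear_combination h / 2
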